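/- The λ_CL term O := λx λy ((if x then T else efq(ā⟨F,s⟩)) ∥_a (if y then T else a π₀)) is a parallel OR: O F F reduces to F, O u T reduces to T, and O T u reduces to T for every term u : Bool. -/

import Mathlib

/-- Formulas/types of λ_CL extended with a base type Bool. -/
inductive FormulaB : Type where
  | bool : FormulaB
  | atom : Nat → FormulaB
  | bot  : FormulaB
  | imp  : FormulaB → FormulaB → FormulaB
  | conj : FormulaB → FormulaB → FormulaB
deriving DecidableEq

/-- λ_CL terms (de Bruijn) with booleans T, F and if-then-else, and the
parallel operator `parC A u v` (u ∥ₐ v, binding channel variable 0 of type ¬A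
in u and A in v) and `par u v` (u ∥ v). -/
inductive TermB : Type where
  | var : Nat → TermB
  | lam : FormulaB → TermB → TermB
  | app : TermB → TermB → TermB
  | pair : TermB → TermB → TermB
  | proj : Bool → TermB → TermB
  | efq : FormulaB → TermB → TermB
  | tt : TermB
  | ff : TermB
  | ite : TermB → TermB → TermB → TermB
  | parC : FormulaB → TermB → TermB → TermB
  | par : TermB → TermB → TermB
deriving DecidableEq

def liftF (f : Nat → Nat) : Nat → Nat
  | 0 => 0
  | n+1 => f n + 1

def TermB.rename (f : Nat → Nat) : TermB → TermB
  | .var n => .var (f n)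
  | .lam A t => .lam A (t.rename (liftF f))
  | .app t u => .app (t.rename f) (u.rename f)
  | .pair t u => .pair (t.rename f) (u.rename f)
  | .proj b t => .proj b (t.rename f)
  | .efq A t => .efq A (t.rename f)
  | .tt => .tt
  | .ff => .ff
  | .ite c s t => .ite (c.rename f) (s.rename f) (t.rename f)
  | .parC A u v => .parC A (u.rename (liftF f)) (v.rename (liftF f))
  | .par u v => .par (u.rename f) (v.rename f)

def TermB.subst (k : Nat) (s : TermB) : TermB → TermB
  | .var n => if n = k then s else if k < n then .var (n-1) else .var n
  | .lam A t => .lam A (TermB.subst (k+1) (s.rename Nat.succ) t)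
  | .app t u => .app (TermB.subst k s t) (TermB.subst k s u)
  | .pair t u => .pair (TermB.subst k s t) (TermB.subst k s u)
  | .proj b t => .proj b (TermB.subst k s t)
  | .efq A t => .efq A (TermB.subst k s t)
  | .tt => .tt
  | .ff => .ff
  | .ite c a b => .ite (TermB.subst k s c) (TermB.subst k s a) (TermB.subst k s b)
  | .parC A u v => .parC A (TermB.subst (k+1) (s.rename Nat.succ) u)
      (TermB.subst (k+1) (s.rename Nat.succ) v)
  | .par u v => .par (TermB.subst k s u) (TermB.subst k s v)

def freeInB (n : Nat) : TermB → Bool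
  | .var m => m == n
  | .lam _ t => freeInB (n+1) t
  | .app t u => freeInB n t || freeInB n u
  | .pair t u => freeInB n t || freeInB n u
  | .proj _ t => freeInB n t
  | .efq _ t => freeInB n t
  | .tt => false
  | .ff => false
  | .ite c s t => freeInB n c || freeInB n s || freeInB n t
  | .parC _ u v => freeInB (n+1) u || freeInB (n+1) v
  | .par u v => freeInB n u || freeInB n v

inductive TypingB : List FormulaB → TermB → FormulaB → Prop where
  | var : Γ[n]? = some A → TypingB Γ (.var n) A
  | lam : TypingB (A::Γ) t B → TypingB Γ (.lam A t) (.imp A B)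
  | app : TypingB Γ t (.imp A B) → TypingB Γ u A → TypingB Γ (.app t u) B
  | pair : TypingB Γ t A → TypingB Γ u B → TypingB Γ (.pair t u) (.conj A B)
  | projL : TypingB Γ t (.conj A B) → TypingB Γ (.proj false t) A
  | projR : TypingB Γ t (.conj A B) → TypingB Γ (.proj true t) B
  | efq : TypingB Γ t .bot → TypingB Γ (.efq P t) P
  | tt : TypingB Γ .tt .bool
  | ff : TypingB Γ .ff .bool
  | ite : TypingB Γ c .bool → TypingB Γ s A → TypingB Γ t A →
      TypingB Γ (.ite c s t) A
  | parC : TypingB (.imp A .bot :: Γ) u C → TypingB (A :: Γ) v C →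
      TypingB Γ (.parC A u v) C
  | par : TypingB Γ u A → TypingB Γ v A → TypingB Γ (.par u v) A

/-- One-hole contexts. -/
inductive CtxB : Type where
  | hole : CtxB
  | lam : FormulaB → CtxB → CtxB
  | appL : CtxB → TermB → CtxB
  | appR : TermB → CtxB → CtxB
  | pairL : CtxB → TermB → CtxB
  | pairR : TermB → CtxB → CtxB
  | proj : Bool → CtxB → CtxB
  | efq : FormulaB → CtxB → CtxB
  | iteC : CtxB → TermB → TermB → CtxB
  | iteL : TermB → CtxB → TermB → CtxB
  | iteR : TermB → TermB → CtxB → CtxB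
  | parCL : FormulaB → CtxB → TermB → CtxB
  | parCR : FormulaB → TermB → CtxB → CtxB
  | parL : CtxB → TermB → CtxB
  | parR : TermB → CtxB → CtxB

def CtxB.fill : CtxB → TermB → TermB
  | .hole, t => t
  | .lam A c, t => .lam A (c.fill t)
  | .appL c u, t => .app (c.fill t) u
  | .appR u c, t => .app u (c.fill t)
  | .pairL c u, t => .pair (c.fill t) u
  | .pairR u c, t => .pair u (c.fill t)
  | .proj b c, t => .proj b (c.fill t)
  | .efq A c, t => .efq A (c.fill t)
  | .iteC c a b, t => .ite (c.fill t) a b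
  | .iteL a c b, t => .ite a (c.fill t) b
  | .iteR a b c, t => .ite a b (c.fill t)
  | .parCL A c u, t => .parC A (c.fill t) u
  | .parCR A u c, t => .parC A u (c.fill t)
  | .parL c u, t => .par (c.fill t) u
  | .parR u c, t => .par u (c.fill t)

/-- Number of binders above the hole. -/
def CtxB.depth : CtxB → Nat
  | .hole => 0
  | .lam _ c => c.depth + 1
  | .appL c _ => c.depth
  | .appR _ c => c.depth
  | .pairL c _ => c.depth
  | .pairR _ c => c.depth
  | .proj _ c => c.depth
  | .efq _ c => c.depth
  | .iteC c _ _ => c.depth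
  | .iteL _ c _ => c.depth
  | .iteR _ _ c => c.depth
  | .parCL _ c _ => c.depth + 1
  | .parCR _ _ c => c.depth + 1
  | .parL c _ => c.depth
  | .parR _ c => c.depth

/-- Reduction for λ_CL with booleans: β, projections, if-then-else reductions,
basic cross reductions C[ā u] ∥ₐ D ↦ D[u/a] and the simplifications
u ∥ₐ v ↦ u (a ∉ u), u ∥ₐ v ↦ v (a ∉ v), closed under all term constructors. -/
inductive RedB : TermB → TermB → Prop where
  | beta : RedB (.app (.lam A t) u) (TermB.subst 0 u t)
  | projL : RedB (.proj false (.pair t u)) t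
  | projR : RedB (.proj true (.pair t u)) u
  | iteT : RedB (.ite .tt s t) s
  | iteF : RedB (.ite .ff s t) t
  | basicCross : ∀ (C : CtxB) (u D : TermB),
      (∀ n, n ≤ C.depth → freeInB n u = false) →
      RedB (.parC B (C.fill (.app (.var C.depth) u)) D)
        (TermB.subst 0 (u.rename (fun n => n - (C.depth + 1))) D)
  | simpL : freeInB 0 u = false →
      RedB (.parC B u v) (TermB.subst 0 (.var 0) u)
  | simpR : freeInB 0 v = false →
      RedB (.parC B u v) (TermB.subst 0 (.var 0) v)
  | lam : RedB t t' → RedB (.lam A t) (.lam A t')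
  | appL : RedB t t' → RedB (.app t u) (.app t' u)
  | appR : RedB u u' → RedB (.app t u) (.app t u')
  | pairL : RedB t t' → RedB (.pair t u) (.pair t' u)
  | pairR : RedB u u' → RedB (.pair t u) (.pair t u')
  | proj : RedB t t' → RedB (.proj b t) (.proj b t')
  | efq : RedB t t' → RedB (.efq A t) (.efq A t')
  | iteC : RedB c c' → RedB (.ite c s t) (.ite c' s t)
  | iteL : RedB s s' → RedB (.ite c s t) (.ite c s' t)
  | iteR : RedB t t' → RedB (.ite c s t) (.ite c s t')
  | parCL : RedB u u' → RedB (.parC A u v) (.parC A u' v)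
  | parCR : RedB v v' → RedB (.parC A u v) (.parC A u v')
  | parL : RedB u u' → RedB (.par u v) (.par u' v)
  | parR : RedB v v' → RedB (.par u v) (.par u v')

/-- The parallel OR:
O := λx λy ((if x then T else efq (ā⟨F,s⟩)) ∥ₐ (if y then T else a π₀)). -/
def parallelOr (S : FormulaB) (s : TermB) : TermB :=
  .lam .bool (.lam .bool (.parC (.conj .bool S)
    (.ite (.var 2) .tt (.efq .bool (.app (.var 0) (.pair .ff s))))
    (.ite (.var 1) .tt (.proj false (.var 0)))))

/-!
After two β-steps, `O u v` is `(if u then T else efq (ā⟨F,s⟩)) ∥ₐ (if v then T else a π₀)`.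
If either argument is `T`, that side becomes the closed term `T`, and the simplification rule
for `∥ₐ` discards the other side, whatever the other argument is. If both are `F`, the left side sends
`⟨F,s⟩` across the channel by a basic cross reduction, leaving `⟨F,s⟩ π₀ ↦ F`.
All terms plugged in are closed, which makes the substitutions and the side conditions trivial.
-/

open Relation

def TermB.Closed (t : TermB) : Prop := ∀ n, freeInB n t = false

theorem TypingB.lt_length_of_freeInB {Γ : List FormulaB} {t : TermB} {A : FormulaB}
    (h : TypingB Γ t A) {n : ℕ} (hn : freeInB n t = true) : n < Γ.length := by
  induction h generalizing n with
  | var hm =>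
    simp only [freeInB, beq_iff_eq] at hn
    subst hn
    exact (List.getElem?_eq_some_iff.mp hm).1
  | lam _ ih => simpa using ih hn
  | parC _ _ ih₁ ih₂ =>
    simp only [freeInB, Bool.or_eq_true] at hn
    rcases hn with hn | hn
    · simpa using ih₁ hn
    · simpa using ih₂ hn
  | _ => simp only [freeInB, Bool.or_eq_true] at hn; aesop

theorem TypingB.closed {t : TermB} {A : FormulaB} (h : TypingB [] t A) : t.Closed :=
  fun n => Bool.eq_false_iff.mpr fun hn => by simpa using h.lt_length_of_freeInB hn

theorem liftF_eq_self {f : ℕ → ℕ} {P : ℕ → Prop} (hf : ∀ n, P (n + 1) → f n = n) :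
    ∀ n, P n → liftF f n = n
  | 0, _ => rfl
  | n + 1, hn => congrArg (· + 1) (hf n hn)

theorem Nat.forall_lt_add_one_of_forall_succ {k : ℕ} {P : ℕ → Prop}
    (hk : ∀ n, P (n + 1) → n < k) : ∀ n, P n → n < k + 1
  | 0, _ => k.succ_pos
  | n + 1, hn => Nat.succ_lt_succ (hk n hn)

namespace TermB

theorem rename_eq_self {t : TermB} {f : ℕ → ℕ} (hf : ∀ n, freeInB n t = true → f n = n) :
    t.rename f = t := by
  induction t generalizing f with
  | var m => simpa [rename, freeInB] using hf m (by simp [freeInB])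
  | lam A t ih => exact congrArg (lam A) (ih (liftF_eq_self hf))
  | parC A u v ihu ihv =>
    simp only [freeInB, Bool.or_eq_true] at hf
    simp only [rename, ihu (liftF_eq_self fun n h => hf n (.inl h)),
      ihv (liftF_eq_self fun n h => hf n (.inr h))]
  | _ => simp only [freeInB, Bool.or_eq_true] at hf; simp_all [rename]

theorem subst_eq_self {t u : TermB} {k : ℕ} (hk : ∀ n, freeInB n t = true → n < k) :
    subst k u t = t := by
  induction t generalizing k u with
  | var m =>
    have hm := hk m (by simp [freeInB])
    simp [subst, hm.ne, hm.not_gt]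
  | lam A t ih => exact congrArg (lam A) (ih (Nat.forall_lt_add_one_of_forall_succ hk))
  | parC A a b iha ihb =>
    simp only [freeInB, Bool.or_eq_true] at hk
    simp only [subst, iha (Nat.forall_lt_add_one_of_forall_succ fun n h => hk n (.inl h)),
      ihb (Nat.forall_lt_add_one_of_forall_succ fun n h => hk n (.inr h))]
  | _ => simp only [freeInB, Bool.or_eq_true] at hk; simp_all [subst]

theorem Closed.rename_eq {t : TermB} (ht : t.Closed) (f : ℕ → ℕ) : t.rename f = t :=
  rename_eq_self fun n hn => by simp [ht n] at hn

theorem Closed.subst_eq {t : TermB} (ht : t.Closed) (k : ℕ) (u : TermB) : subst k u t = t :=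
  subst_eq_self fun n hn => by simp [ht n] at hn

end TermB

namespace RedB

theorem beta_of_subst_eq {A : FormulaB} {t u t' : TermB} (h : TermB.subst 0 u t = t') :
    RedB (.app (.lam A t) u) t' :=
  h ▸ beta

theorem parC_tt_left {A : FormulaB} {v : TermB} : RedB (.parC A .tt v) .tt :=
  simpL (by simp [freeInB])

theorem parC_tt_right {A : FormulaB} {u : TermB} : RedB (.parC A u .tt) .tt :=
  simpR (by simp [freeInB])

theorem parC_efq_cross {A B : FormulaB} {w v : TermB} (hw : w.Closed) :
    RedB (.parC A (.efq B (.app (.var 0) w)) v) (TermB.subst 0 w v) := by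
  simpa [CtxB.fill, CtxB.depth, hw.rename_eq] using
    basicCross (B := A) (.efq B .hole) w v fun n _ => hw n

end RedB

def parallelOrBody (S : FormulaB) (s u v : TermB) : TermB :=
  .parC (.conj .bool S)
    (.ite u .tt (.efq .bool (.app (.var 0) (.pair .ff s))))
    (.ite v .tt (.proj false (.var 0)))

theorem parallelOr_app_app {S : FormulaB} {s u v : TermB} (hs : s.Closed) (hu : u.Closed)
    (hv : v.Closed) :
    ReflTransGen RedB (.app (.app (parallelOr S s) u) v) (parallelOrBody S s u v) := by
  refine .tail (.single (.appL (RedB.beta_of_subst_eq rfl))) (RedB.beta_of_subst_eq ?_)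
  simp [parallelOrBody, TermB.subst, hs.subst_eq, hu.rename_eq, hu.subst_eq, hv.rename_eq]

theorem parallelOrBody_ff_ff {S : FormulaB} {s : TermB} (hs : s.Closed) :
    ReflTransGen RedB (parallelOrBody S s .ff .ff) .ff :=
  (((ReflTransGen.single (.parCL .iteF)).tail (.parCR .iteF)).tail
    (RedB.parC_efq_cross (v := .proj false (.var 0)) fun n => by simp [freeInB, hs n])).tail .projL

theorem parallelOrBody_tt_right (S : FormulaB) (s u : TermB) :
    ReflTransGen RedB (parallelOrBody S s u .tt) .tt :=
  (ReflTransGen.single (.parCR .iteT)).tail .parC_tt_right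

theorem parallelOrBody_tt_left (S : FormulaB) (s v : TermB) :
    ReflTransGen RedB (parallelOrBody S s .tt v) .tt :=
  (ReflTransGen.single (.parCL .iteT)).tail .parC_tt_left

/-- the term O is a parallel OR: O F F ↦* F, O u T ↦* T and
O T u ↦* T for every term u : Bool. -/
theorem parallel_or_correct (S : FormulaB) (s : TermB) (hs : TypingB [] s S) :
    Relation.ReflTransGen RedB
      (.app (.app (parallelOr S s) .ff) .ff) .ff ∧
    ∀ u, TypingB [] u .bool →
      Relation.ReflTransGen RedB (.app (.app (parallelOr S s) u) .tt) .tt ∧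
      Relation.ReflTransGen RedB (.app (.app (parallelOr S s) .tt) u) .tt := by
  have hs := hs.closed
  have htt : TermB.tt.Closed := fun _ => rfl
  have hff : TermB.ff.Closed := fun _ => rfl
  refine ⟨(parallelOr_app_app hs hff hff).trans (parallelOrBody_ff_ff hs), fun u hu => ?_⟩
  have hu := hu.closed
  exact ⟨(parallelOr_app_app hs hu htt).trans (parallelOrBody_tt_right S s u),
    (parallelOr_app_app hs htt hu).trans (parallelOrBody_tt_left S s u)⟩
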